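/- With the notation of the previous statement (T an ITM of d intervals with γ₁ > 0, γ_d < 0, Δ₁ ∩ T(Ω) ≠ ∅, Δ_d ∩ T(Ω) ≠ ∅, Δ = [δ₀, δ₁)), the interval Δ is T-regular: there exists N such that for every x ∈ [0,1) there is 1 ≤ n < N with Tⁿ(x) ∈ Δ. -/

import Mathlib

/-!
Let `ε > 0` be the smallest `|γᵢ|`. A point `y < δ₀` lies in a branch with `γᵢ > 0`, since a
negative translation would send it below `δ₀ ≤ β_{i-1} + γᵢ`; so `T y ≥ y + ε`, and
`T y < βᵢ + γᵢ ≤ δ₁`. Symmetrically, a point `y ≥ δ₁` moves down by at least `ε` and stays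
`≥ δ₀`. Hence an orbit outside `Δ` moves monotonically towards `Δ` by steps of at least `ε`
without ever jumping over it, and, being confined to `[0,1)`, enters `Δ` within `⌈1/ε⌉` steps.
-/

open Set Function

theorem exists_pos_forall_le_abs {ι : Type*} [Finite ι] {g : ι → ℝ} (hg : ∀ i, g i ≠ 0) :
    ∃ ε > 0, ∀ i, ε ≤ |g i| := by
  cases isEmpty_or_nonempty ι
  · exact ⟨1, one_pos, isEmptyElim⟩
  · obtain ⟨i₀, hi₀⟩ := Finite.exists_min (fun i => |g i|)
    exact ⟨_, abs_pos.2 (hg i₀), hi₀⟩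

theorem exists_mem_Ico_castSucc_succ {α : Type*} [LinearOrder α] {d : ℕ} (β : Fin (d + 1) → α)
    {y : α} (h₀ : β 0 ≤ y) (h₁ : y < β (Fin.last d)) :
    ∃ i : Fin d, y ∈ Ico (β i.castSucc) (β i.succ) := by
  induction d with
  | zero => exact absurd (h₀.trans_lt h₁) (lt_irrefl _)
  | succ d ih =>
    rcases lt_or_ge y (β (Fin.last d).castSucc) with h | h
    · obtain ⟨i, hi⟩ := ih (β ∘ Fin.castSucc) h₀ h
      exact ⟨i.castSucc, by simpa only [comp_apply, Fin.succ_castSucc] using hi⟩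
    · exact ⟨Fin.last d, h, by simpa only [Fin.succ_last] using h₁⟩

section Escape

variable {α : Type*} {f : α → α} {s : Set α} {p q : α → Prop} {V : α → ℝ} {ε c : ℝ}

theorem add_mul_le_potential_iterate (hs : MapsTo f s s)
    (hstep : ∀ y ∈ s, p y → V y + ε ≤ V (f y)) {y : α} (hy : y ∈ s) :
    ∀ n : ℕ, (∀ m < n, p (f^[m] y)) → V y + n * ε ≤ V (f^[n] y)
  | 0, _ => by simp
  | n + 1, h => by
    have ih := add_mul_le_potential_iterate hs hstep hy n fun m hm => h m (hm.trans n.lt_succ_self)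
    have hn := hstep _ (hs.iterate n hy) (h n n.lt_succ_self)
    rw [iterate_succ_apply']
    push_cast
    linarith

theorem exists_iterate_not_and_of_potential (hε : 0 < ε) {K : ℕ} (hK : c ≤ K * ε)
    (hs : MapsTo f s s) (hV : ∀ y ∈ s, ∀ z ∈ s, V z ≤ V y + c)
    (hstep : ∀ y ∈ s, p y → V y + ε ≤ V (f y) ∧ q (f y)) {y : α} (hy : y ∈ s) (hp : p y) :
    ∃ n ≤ K, ¬ p (f^[n] y) ∧ q (f^[n] y) := by
  have hbound : ∀ n : ℕ, (∀ m < n, p (f^[m] y)) → n * ε ≤ c := fun n h => by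
    have := add_mul_le_potential_iterate hs (fun y hy hp => (hstep y hy hp).1) hy n h
    linarith [hV y hy _ (hs.iterate n hy)]
  have hexit : ∃ n, ¬ p (f^[n] y) := by
    by_contra! hall
    have := hbound (K + 1) fun m _ => hall m
    push_cast at this
    linarith
  classical
  obtain ⟨n, hn, hmin⟩ : ∃ n, ¬ p (f^[n] y) ∧ ∀ m < n, p (f^[m] y) :=
    ⟨Nat.find hexit, Nat.find_spec hexit, fun m hm => not_not.1 (Nat.find_min hexit hm)⟩
  cases n with
  | zero => exact absurd hp hn
  | succ n =>
    refine ⟨n + 1, ?_, hn, ?_⟩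
    · exact_mod_cast le_of_mul_le_mul_right ((hbound _ hmin).trans hK) hε
    · rw [iterate_succ_apply']
      exact (hstep _ (hs.iterate n hy) (hmin n n.lt_succ_self)).2

end Escape

section IntervalTranslationMap

variable {d : ℕ} {β : Fin (d + 1) → ℝ} {γ : Fin d → ℝ} {T : ℝ → ℝ} {δ₀ δ₁ ε : ℝ}

theorem add_le_apply_and_apply_lt_of_lt (hβ0 : β 0 = 0) (hβd : β (Fin.last d) = 1)
    (hγ : ∀ i, γ i ≠ 0) (hT : ∀ i : Fin d, ∀ x ∈ Ico (β i.castSucc) (β i.succ), T x = x + γ i)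
    (hδ₀min : ∀ i, γ i < 0 → δ₀ ≤ β i.castSucc + γ i)
    (hδ₁max : ∀ i, 0 < γ i → β i.succ + γ i ≤ δ₁) (hε : ∀ i, ε ≤ |γ i|)
    {y : ℝ} (hy : y ∈ Ico 0 1) (h : y < δ₀) : y + ε ≤ T y ∧ T y < δ₁ := by
  obtain ⟨i, hi⟩ := exists_mem_Ico_castSucc_succ β (hβ0 ▸ hy.1) (hβd ▸ hy.2)
  have hpos : 0 < γ i := (hγ i).lt_or_gt.resolve_left fun hneg => by
    linarith [hδ₀min i hneg, hi.1]
  have hεi := hε i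
  rw [abs_of_pos hpos] at hεi
  rw [hT i y hi]
  exact ⟨by linarith, by linarith [hδ₁max i hpos, hi.2]⟩

theorem apply_le_sub_and_le_apply_of_le (hβ0 : β 0 = 0) (hβd : β (Fin.last d) = 1)
    (hγ : ∀ i, γ i ≠ 0) (hT : ∀ i : Fin d, ∀ x ∈ Ico (β i.castSucc) (β i.succ), T x = x + γ i)
    (hδ₀min : ∀ i, γ i < 0 → δ₀ ≤ β i.castSucc + γ i)
    (hδ₁max : ∀ i, 0 < γ i → β i.succ + γ i ≤ δ₁) (hε : ∀ i, ε ≤ |γ i|)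
    {y : ℝ} (hy : y ∈ Ico 0 1) (h : δ₁ ≤ y) : T y ≤ y - ε ∧ δ₀ ≤ T y := by
  obtain ⟨i, hi⟩ := exists_mem_Ico_castSucc_succ β (hβ0 ▸ hy.1) (hβd ▸ hy.2)
  have hneg : γ i < 0 := (hγ i).lt_or_gt.resolve_right fun hpos => by
    linarith [hδ₁max i hpos, hi.2]
  have hεi := hε i
  rw [abs_of_neg hneg] at hεi
  rw [hT i y hi]
  exact ⟨by linarith, by linarith [hδ₀min i hneg, hi.1]⟩

end IntervalTranslationMap

theorem fitting_regular_general
    (d : ℕ) (β : Fin (d + 1) → ℝ) (γ : Fin d → ℝ) (T : ℝ → ℝ)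
    (hβ0 : β 0 = 0) (hβd : β (Fin.last d) = 1)
    (hγ : ∀ i, γ i ≠ 0)
    (hT : ∀ i : Fin d, ∀ x ∈ Set.Ico (β i.castSucc) (β i.succ), T x = x + γ i)
    (hmap : Set.MapsTo T (Set.Ico 0 1) (Set.Ico 0 1))
    (δ₀ δ₁ : ℝ)
    (hδ₀min : ∀ i, γ i < 0 → δ₀ ≤ β i.castSucc + γ i)
    (hδ₁max : ∀ i, 0 < γ i → β i.succ + γ i ≤ δ₁)
    : ∃ N : ℕ, ∀ x ∈ Set.Ico (0:ℝ) 1, ∃ n : ℕ, 1 ≤ n ∧ n < N ∧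
      T^[n] x ∈ Set.Ico δ₀ δ₁ := by
  obtain ⟨ε, hε, hεγ⟩ := exists_pos_forall_le_abs hγ
  have hK : 1 ≤ ⌈1 / ε⌉₊ * ε := (div_le_iff₀ hε).1 (Nat.le_ceil _)
  have hosc : ∀ y ∈ Ico (0 : ℝ) 1, ∀ z ∈ Ico (0 : ℝ) 1, z ≤ y + 1 ∧ -z ≤ -y + 1 :=
    fun y hy z hz => ⟨by linarith [hy.1, hz.2], by linarith [hy.2, hz.1]⟩
  refine ⟨⌈1 / ε⌉₊ + 2, fun x hx => ?_⟩
  rcases lt_or_ge (T x) δ₀ with hlow | hge₀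
  · obtain ⟨n, hnK, hn₀, hn₁⟩ := exists_iterate_not_and_of_potential (q := (· < δ₁)) (V := id) hε hK hmap
      (fun y hy z hz => (hosc y hy z hz).1)
      (fun y hy h => add_le_apply_and_apply_lt_of_lt hβ0 hβd hγ hT hδ₀min hδ₁max hεγ hy h)
      (hmap hx) hlow
    exact ⟨n + 1, by omega, by omega, by rw [iterate_succ_apply]; exact ⟨not_lt.1 hn₀, hn₁⟩⟩
  rcases lt_or_ge (T x) δ₁ with hlt₁ | hhigh
  · exact ⟨1, le_rfl, by omega, hge₀, hlt₁⟩
  · obtain ⟨n, hnK, hn₁, hn₀⟩ := exists_iterate_not_and_of_potential (q := (δ₀ ≤ ·)) (V := Neg.neg) hε hK hmap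
      (fun y hy z hz => (hosc y hy z hz).2)
      (fun y hy h =>
        have := apply_le_sub_and_le_apply_of_le hβ0 hβd hγ hT hδ₀min hδ₁max hεγ hy h
        ⟨by linarith [this.1], this.2⟩)
      (hmap hx) hhigh
    exact ⟨n + 1, by omega, by omega, by rw [iterate_succ_apply]; exact ⟨hn₀, not_le.1 hn₁⟩⟩

/-- For an ITM of `d` intervals in the irreducible case, the interval
`Δ = [δ₀, δ₁)` is `T`-regular: there is `N` such that every point of `[0,1)`
enters `Δ` within fewer than `N` iterates of `T`. -/
theorem fitting_regular
    (d : ℕ) (hd : 0 < d) (β : Fin (d + 1) → ℝ) (γ : Fin d → ℝ) (T : ℝ → ℝ)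
    (hβ : StrictMono β) (hβ0 : β 0 = 0) (hβd : β (Fin.last d) = 1)
    (hγ : ∀ i, γ i ≠ 0)
    (hT : ∀ i : Fin d, ∀ x ∈ Set.Ico (β i.castSucc) (β i.succ), T x = x + γ i)
    (hmap : Set.MapsTo T (Set.Ico 0 1) (Set.Ico 0 1))
    (hγ₁ : 0 < γ ⟨0, hd⟩) (hγd : γ ⟨d - 1, Nat.sub_lt hd one_pos⟩ < 0)
    (hΔ₁ : (Set.Ico (β (⟨0, hd⟩ : Fin d).castSucc) (β (⟨0, hd⟩ : Fin d).succ) ∩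
      T '' Set.Ico 0 1).Nonempty)
    (hΔd : (Set.Ico (β (⟨d - 1, Nat.sub_lt hd one_pos⟩ : Fin d).castSucc)
      (β (⟨d - 1, Nat.sub_lt hd one_pos⟩ : Fin d).succ) ∩ T '' Set.Ico 0 1).Nonempty)
    (δ₀ δ₁ : ℝ)
    (j : Fin d) (hj : γ j < 0) (hδ₀ : δ₀ = β j.castSucc + γ j)
    (hδ₀min : ∀ i, γ i < 0 → δ₀ ≤ β i.castSucc + γ i)
    (k : Fin d) (hk : 0 < γ k) (hδ₁ : δ₁ = β k.succ + γ k)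
    (hδ₁max : ∀ i, 0 < γ i → β i.succ + γ i ≤ δ₁)
    : ∃ N : ℕ, ∀ x ∈ Set.Ico (0:ℝ) 1, ∃ n : ℕ, 1 ≤ n ∧ n < N ∧
      T^[n] x ∈ Set.Ico δ₀ δ₁ :=
  fitting_regular_general d β γ T hβ0 hβd hγ hT hmap δ₀ δ₁ hδ₀min hδ₁max
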